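/- Let X ⊆ ℝⁿ be a nonempty compact convex set and f : ℝⁿ → ℝ twice continuously differentiable with μ·I ⪯ ∇²f(x) ⪯ L·I for all x ∈ X (0 < μ ≤ L), with unique minimizer x* over X. Fix x_k ∈ X with x_k ≠ x*, a symmetric positive definite H_k, and set η_k := max{λ_max(H_k⁻¹∇²f(x_k)), λ_max((∇²f(x_k))⁻¹H_k)}. Let f̂_k(x) := f(x_k) + ⟨∇f(x_k), x − x_k⟩ + ½‖x − x_k‖²_{H_k} with minimizer x̃*_{k+1} over X, let lb be a real number with 0 ≤ lb ≤ f(x_k) − f(x*), and let x̃ ∈ X satisfy f̂_k(x̃) − f̂_k(x̃*_{k+1}) ≤ ( lb/‖∇f(x_k)‖ )⁴. Then ‖x̃ − x̃*_{k+1}‖ ≤ √(2η_k/μ) · ‖x_k − x*‖². -/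

import Mathlib

open Matrix
open scoped RealInnerProductSpace

/-- The largest (real) eigenvalue of a matrix, as the supremum of its real spectrum. -/
noncomputable def lamMax {n : ℕ} (M : Matrix (Fin n) (Fin n) ℝ) : ℝ :=
  sSup (spectrum ℝ M)

/-- The smallest (real) eigenvalue of a matrix, as the infimum of its real spectrum. -/
noncomputable def lamMin {n : ℕ} (M : Matrix (Fin n) (Fin n) ℝ) : ℝ :=
  sInf (spectrum ℝ M)

/-- Action of a matrix on a vector of Euclidean space. -/
noncomputable def mApply {n : ℕ} (H : Matrix (Fin n) (Fin n) ℝ)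
    (v : EuclideanSpace ℝ (Fin n)) : EuclideanSpace ℝ (Fin n) :=
  Matrix.toEuclideanCLM (𝕜 := ℝ) H v

/-- The squared matrix "norm" ‖v‖²_H := vᵀ H v. -/
noncomputable def qForm {n : ℕ} (H : Matrix (Fin n) (Fin n) ℝ)
    (v : EuclideanSpace ℝ (Fin n)) : ℝ :=
  ⟪v, mApply H v⟫

/-- Spectral (ℓ² operator) norm of a matrix. -/
noncomputable def mNorm {n : ℕ} (H : Matrix (Fin n) (Fin n) ℝ) : ℝ :=
  ‖Matrix.toEuclideanCLM (𝕜 := ℝ) H‖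

/-!
Convexity of `f` on `X` gives `f x_k - f x* ≤ ⟪∇f x_k, x_k - x*⟫ ≤ ‖∇f x_k‖ ‖x_k - x*‖`, so the
tolerance `(lb / ‖∇f x_k‖)⁴` is at most `‖x_k - x*‖⁴`. Since `x̃*_{k+1}` minimizes the quadratic
model over the convex set `X`, its linear term along the segment towards `x̃` is nonnegative, hence
`f̂_k x̃ - f̂_k x̃*_{k+1} ≥ ½ ‖x̃ - x̃*_{k+1}‖²_{H_k}`. Finally, with `A = ∇²f x_k`,
`μ ‖v‖² ≤ vᵀ A v ≤ λ_max(H_k⁻¹ A) ‖v‖²_{H_k}`: conjugating by `S = H_k^{1/2}` turns `H_k⁻¹ A` into the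
symmetric matrix `S⁻¹ A S⁻¹` with the same spectrum, which is `⪯ λ_max • 1`, i.e. `A ⪯ λ_max • H_k`.
-/

open scoped MatrixOrder

lemma nonneg_of_forall_Ioc_mul_add_sq_mul_nonneg {a b : ℝ}
    (h : ∀ t ∈ Set.Ioc (0 : ℝ) 1, 0 ≤ t * a + t ^ 2 * b) : 0 ≤ a := by
  have hev : ∀ᶠ t in nhdsWithin (0 : ℝ) (Set.Ioi 0), 0 ≤ a + t * b :=
    Filter.mem_of_superset (Ioc_mem_nhdsGT one_pos) fun t ht =>
      nonneg_of_mul_nonneg_right (by linarith [h t ht]) ht.1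
  have hcont : Continuous fun t : ℝ => a + t * b := by fun_prop
  exact ge_of_tendsto (by simpa using (hcont.tendsto 0).mono_left nhdsWithin_le_nhds) hev

lemma le_sqrt_div_mul_of_mul_sq_le {μ c x r : ℝ} (hμ : 0 < μ) (hr : 0 ≤ r)
    (h : μ * x ^ 2 ≤ c * r ^ 2) : x ≤ √(c / μ) * r :=
  calc x ≤ √(x ^ 2) := (Real.sqrt_sq_eq_abs x).symm ▸ le_abs_self x
    _ ≤ √(c / μ * r ^ 2) := Real.sqrt_le_sqrt <| by rw [div_mul_eq_mul_div, le_div_iff₀ hμ]; linarith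
    _ = √(c / μ) * r := by rw [Real.sqrt_mul' _ (sq_nonneg r), Real.sqrt_sq hr]

theorem Convex.sub_le_inner_gradient_of_hessian_nonneg {E : Type*} [NormedAddCommGroup E]
    [InnerProductSpace ℝ E] [CompleteSpace E] {X : Set E} (hX : Convex ℝ X) {f : E → ℝ}
    (hf : Differentiable ℝ f) {f'' : E → E →L[ℝ] E}
    (hf'' : ∀ x, HasFDerivAt (gradient f) (f'' x) x) (hpsd : ∀ x ∈ X, ∀ v, 0 ≤ ⟪v, f'' x v⟫)
    {a b : E} (ha : a ∈ X) (hb : b ∈ X) :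
    f a - f b ≤ ⟪gradient f a, a - b⟫ := by
  set γ : ℝ → E := fun t => a + t • (b - a)
  have hγ : ∀ t, HasDerivAt γ (b - a) t := fun t =>
    (((hasDerivAt_id t).smul_const (b - a)).const_add a).congr_deriv (one_smul ℝ _)
  have hφ' : ∀ t, HasDerivAt (fun s => f (γ s)) ⟪gradient f (γ t), b - a⟫ t := fun t =>
    (hf (γ t)).hasGradientAt.hasFDerivAt.comp_hasDerivAt t (hγ t)
  have hφ'' : ∀ t, HasDerivAt (fun s => ⟪gradient f (γ s), b - a⟫) ⟪b - a, f'' (γ t) (b - a)⟫ t :=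
    fun t => ((hf'' (γ t)).comp_hasDerivAt t (hγ t)).inner ℝ (hasDerivAt_const t (b - a))
      |>.congr_deriv (by simp [real_inner_comm])
  have hconv : ConvexOn ℝ (Set.Icc 0 1) (fun s => f (γ s)) :=
    convexOn_of_hasDerivWithinAt2_nonneg (convex_Icc 0 1)
      (fun t _ => (hφ' t).continuousAt.continuousWithinAt)
      (fun t _ => (hφ' t).hasDerivWithinAt) (fun t _ => (hφ'' t).hasDerivWithinAt)
      (fun t ht => hpsd _ (hX.add_smul_sub_mem ha hb (interior_subset ht)) _)
  have hslope := hconv.le_slope_of_hasDerivAt (by simp) (by simp) zero_lt_one (hφ' 0)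
  simp only [slope_def_field, γ, zero_smul, add_zero, one_smul, add_sub_cancel] at hslope
  rw [← neg_sub b a, inner_neg_right]
  linarith

namespace Matrix

variable {ι : Type*} [Fintype ι] [DecidableEq ι] {P A : Matrix ι ι ℝ}

lemma PosDef.exists_sqrt (hP : P.PosDef) :
    ∃ S : Matrix ι ι ℝ, IsSelfAdjoint S ∧ IsUnit S ∧ S * S = P :=
  ⟨CFC.sqrt P, (CFC.sqrt_nonneg P).isSelfAdjoint,
    (CFC.isUnit_sqrt_iff P hP.posSemidef.nonneg).2 hP.isUnit,
    CFC.sqrt_mul_sqrt_self P hP.posSemidef.nonneg⟩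

lemma spectrum_inv_mul_eq_spectrum_conj {S : Matrix ι ι ℝ} (hS : IsUnit S) (hSP : S * S = P) :
    spectrum ℝ (P⁻¹ * A) = spectrum ℝ (S⁻¹ * A * S⁻¹) := by
  conv_rhs => rw [← spectrum.units_conjugate' (u := hS.unit)]
  simp only [IsUnit.unit_spec, coe_units_inv, ← hSP, mul_inv_rev, mul_assoc,
    nonsing_inv_mul S ((isUnit_iff_isUnit_det S).1 hS), mul_one]

lemma le_sSup_spectrum_inv_mul_smul (hP : P.PosDef) (hA : A.IsHermitian) :
    A ≤ sSup (spectrum ℝ (P⁻¹ * A)) • P := by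
  obtain ⟨S, hSa, hS, hSP⟩ := hP.exists_sqrt
  have hM : IsSelfAdjoint (S⁻¹ * A * S⁻¹) := IsSelfAdjoint.conjugate_self hA hSa.isHermitian.inv
  have hbdd : BddAbove (spectrum ℝ (S⁻¹ * A * S⁻¹)) := by
    rw [IsHermitian.spectrum_real_eq_range_eigenvalues hM]; exact (Set.finite_range _).bddAbove
  have hle := le_algebraMap_of_spectrum_le (r := sSup (spectrum ℝ (P⁻¹ * A)))
    (fun x hx => by rw [spectrum_inv_mul_eq_spectrum_conj hS hSP]; exact le_csSup hbdd hx) hM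
  have hdet := (isUnit_iff_isUnit_det S).1 hS
  calc A = S * (S⁻¹ * A * S⁻¹) * S := by
        rw [← mul_assoc, ← mul_assoc, mul_nonsing_inv S hdet, one_mul, mul_assoc,
          nonsing_inv_mul S hdet, mul_one]
    _ ≤ S * algebraMap ℝ _ (sSup (spectrum ℝ (P⁻¹ * A))) * S := hSa.conjugate_le_conjugate hle
    _ = sSup (spectrum ℝ (P⁻¹ * A)) • P := by
        rw [Algebra.algebraMap_eq_smul_one, mul_smul_comm, mul_one, smul_mul_assoc, hSP]

lemma sSup_spectrum_inv_mul_nonneg (hP : P.PosDef) (hA : A.PosSemidef) :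
    0 ≤ sSup (spectrum ℝ (P⁻¹ * A)) := by
  obtain ⟨S, hSa, hS, hSP⟩ := hP.exists_sqrt
  have hM : 0 ≤ S⁻¹ * A * S⁻¹ := IsSelfAdjoint.conjugate_nonneg hA.nonneg hSa.isHermitian.inv
  exact Real.sSup_nonneg fun x hx =>
    spectrum_nonneg_of_nonneg hM (by rwa [← spectrum_inv_mul_eq_spectrum_conj hS hSP])

end Matrix

section QuadraticForm

variable {n : ℕ}

lemma qForm_eq_dotProduct (H : Matrix (Fin n) (Fin n) ℝ) (v : EuclideanSpace ℝ (Fin n)) :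
    qForm H v = star v.ofLp ⬝ᵥ H *ᵥ v.ofLp := by
  simp [qForm, mApply, PiLp.inner_apply, dotProduct, mul_comm]

lemma qForm_sub (A B : Matrix (Fin n) (Fin n) ℝ) (v : EuclideanSpace ℝ (Fin n)) :
    qForm (A - B) v = qForm A v - qForm B v := by
  simp [qForm, mApply, inner_sub_right]

lemma qForm_smul (c : ℝ) (H : Matrix (Fin n) (Fin n) ℝ) (v : EuclideanSpace ℝ (Fin n)) :
    qForm (c • H) v = c * qForm H v := by
  simp [qForm, mApply, real_inner_smul_right]

lemma qForm_one (v : EuclideanSpace ℝ (Fin n)) : qForm 1 v = ‖v‖ ^ 2 := by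
  simp [qForm, mApply]

lemma qForm_nonneg {H : Matrix (Fin n) (Fin n) ℝ} (hH : H.PosSemidef)
    (v : EuclideanSpace ℝ (Fin n)) : 0 ≤ qForm H v := by
  rw [qForm_eq_dotProduct]; exact hH.dotProduct_mulVec_nonneg _

lemma qForm_mono {A B : Matrix (Fin n) (Fin n) ℝ} (h : A ≤ B) (v : EuclideanSpace ℝ (Fin n)) :
    qForm A v ≤ qForm B v :=
  sub_nonneg.1 <| qForm_sub B A v ▸ qForm_nonneg h v

lemma qForm_add_smul {H : Matrix (Fin n) (Fin n) ℝ} (hH : H.IsHermitian)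
    (x d : EuclideanSpace ℝ (Fin n)) (t : ℝ) :
    qForm H (x + t • d) = qForm H x + 2 * t * ⟪x, mApply H d⟫ + t ^ 2 * qForm H d := by
  have hsymm : ⟪d, mApply H x⟫ = ⟪x, mApply H d⟫ := by
    rw [real_inner_comm]; exact Matrix.isSymmetric_toEuclideanLin_iff.2 hH x d
  simp only [qForm, mApply, map_add, map_smul, inner_add_left, inner_add_right,
    real_inner_smul_left, real_inner_smul_right] at hsymm ⊢
  rw [hsymm]; ring

lemma half_qForm_le_sub_of_isMinOn {X : Set (EuclideanSpace ℝ (Fin n))} (hX : Convex ℝ X)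
    {H : Matrix (Fin n) (Fin n) ℝ} (hH : H.IsHermitian) {φ : EuclideanSpace ℝ (Fin n) → ℝ}
    {c : ℝ} {g x₀ : EuclideanSpace ℝ (Fin n)}
    (hφ : ∀ x, φ x = c + ⟪g, x - x₀⟫ + 1 / 2 * qForm H (x - x₀))
    {x y : EuclideanSpace ℝ (Fin n)} (hx : x ∈ X) (hy : y ∈ X) (hmin : IsMinOn φ X x) :
    1 / 2 * qForm H (y - x) ≤ φ y - φ x := by
  set a := ⟪g, y - x⟫ + ⟪x - x₀, mApply H (y - x)⟫
  have hexp (t : ℝ) :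
      φ (x + t • (y - x)) - φ x = t * a + t ^ 2 * (1 / 2 * qForm H (y - x)) := by
    rw [hφ, hφ, show x + t • (y - x) - x₀ = (x - x₀) + t • (y - x) by abel, qForm_add_smul hH,
      inner_add_right, real_inner_smul_right]
    ring
  have ha : 0 ≤ a := nonneg_of_forall_Ioc_mul_add_sq_mul_nonneg fun t ht => by
    rw [← hexp]
    exact sub_nonneg.2 <| isMinOn_iff.1 hmin _ <|
      hX.add_smul_sub_mem hx hy (Set.Ioc_subset_Icc_self ht)
  have h1 := hexp 1
  rw [one_smul, add_sub_cancel] at h1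
  linarith

end QuadraticForm

theorem socgs_inexact_projection_accuracy_general {n : ℕ}
    (X : Set (EuclideanSpace ℝ (Fin n)))
    (hconv : Convex ℝ X)
    (f : EuclideanSpace ℝ (Fin n) → ℝ) (hf : ContDiff ℝ 2 f)
    (Hess : EuclideanSpace ℝ (Fin n) → Matrix (Fin n) (Fin n) ℝ)
    (hHess : ∀ x, HasFDerivAt (gradient f) (Matrix.toEuclideanCLM (𝕜 := ℝ) (Hess x)) x)
    (μ L : ℝ) (hμ : 0 < μ)
    (hbound : ∀ x ∈ X, (Hess x - μ • (1 : Matrix (Fin n) (Fin n) ℝ)).PosSemidef ∧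
      (L • (1 : Matrix (Fin n) (Fin n) ℝ) - Hess x).PosSemidef)
    (xstar : EuclideanSpace ℝ (Fin n)) (hxstar : xstar ∈ X)
    (xk : EuclideanSpace ℝ (Fin n)) (hxk : xk ∈ X)
    (Hk : Matrix (Fin n) (Fin n) ℝ) (hHk : Hk.PosDef)
    (ηk : ℝ) (hηk : ηk = max (lamMax (Hk⁻¹ * Hess xk)) (lamMax ((Hess xk)⁻¹ * Hk)))
    (fhat : EuclideanSpace ℝ (Fin n) → ℝ)
    (hfhat : ∀ x, fhat x =
      f xk + ⟪gradient f xk, x - xk⟫ + (1 / 2) * qForm Hk (x - xk))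
    (xt : EuclideanSpace ℝ (Fin n)) (hxtX : xt ∈ X)
    (hxtmin : ∀ w ∈ X, fhat xt ≤ fhat w)
    (lb : ℝ) (hlb0 : 0 ≤ lb) (hlb : lb ≤ f xk - f xstar)
    (xtil : EuclideanSpace ℝ (Fin n)) (hxtilX : xtil ∈ X)
    (hxtil : fhat xtil - fhat xt ≤ (lb / ‖gradient f xk‖) ^ 4) :
    ‖xtil - xt‖ ≤ Real.sqrt (2 * ηk / μ) * ‖xk - xstar‖ ^ 2 := by
  have hHess_ge : ∀ x ∈ X, μ • 1 ≤ Hess x := fun x hx => (hbound x hx).1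
  have hHess_psd : ∀ x ∈ X, (Hess x).PosSemidef := fun x hx => by
    simpa using (hbound x hx).1.add (Matrix.PosSemidef.one.smul hμ.le)
  set R := ‖xk - xstar‖ ^ 2
  have hgap : lb ≤ ‖gradient f xk‖ * ‖xk - xstar‖ :=
    hlb.trans <| (hconv.sub_le_inner_gradient_of_hessian_nonneg (hf.differentiable (by norm_num))
      hHess (fun x hx => qForm_nonneg (hHess_psd x hx)) hxk hxstar).trans (real_inner_le_norm _ _)
  have hε : (lb / ‖gradient f xk‖) ^ 4 ≤ R ^ 2 := by
    rw [← pow_mul]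
    exact pow_le_pow_left₀ (by positivity)
      (div_le_of_le_mul₀ (norm_nonneg _) (norm_nonneg _) (by linarith)) 4
  have hq : qForm Hk (xtil - xt) ≤ 2 * R ^ 2 := by
    linarith [half_qForm_le_sub_of_isMinOn hconv hHk.isHermitian hfhat hxtX hxtilX
      (isMinOn_iff.2 hxtmin)]
  have hlam : lamMax (Hk⁻¹ * Hess xk) ≤ ηk := by rw [hηk]; exact le_max_left _ _
  have hη : 0 ≤ ηk := (Matrix.sSup_spectrum_inv_mul_nonneg hHk (hHess_psd xk hxk)).trans hlam
  refine le_sqrt_div_mul_of_mul_sq_le hμ (by positivity) ?_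
  calc μ * ‖xtil - xt‖ ^ 2 = qForm (μ • 1) (xtil - xt) := by rw [qForm_smul, qForm_one]
    _ ≤ qForm (Hess xk) (xtil - xt) := qForm_mono (hHess_ge xk hxk) _
    _ ≤ qForm (lamMax (Hk⁻¹ * Hess xk) • Hk) (xtil - xt) :=
        qForm_mono (Matrix.le_sSup_spectrum_inv_mul_smul hHk (hHess_psd xk hxk).isHermitian) _
    _ ≤ ηk * qForm Hk (xtil - xt) := by
        rw [qForm_smul]; exact mul_le_mul_of_nonneg_right hlam (qForm_nonneg hHk.posSemidef _)
    _ ≤ 2 * ηk * R ^ 2 := by linarith [mul_le_mul_of_nonneg_left hq hη]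

/-- inexact scaled projections stay close to the exact one: if `x̃ ∈ X`
is an `ε_k`-optimal solution of the quadratic model with
`ε_k = (lb/‖∇f(x_k)‖)⁴` where `0 ≤ lb ≤ f(x_k) − f(x*)`, then
`‖x̃ − x̃*_{k+1}‖ ≤ √(2η_k/μ)·‖x_k − x*‖²`. -/
theorem socgs_inexact_projection_accuracy {n : ℕ}
    (X : Set (EuclideanSpace ℝ (Fin n)))
    (hne : X.Nonempty) (hcomp : IsCompact X) (hconv : Convex ℝ X)
    (f : EuclideanSpace ℝ (Fin n) → ℝ) (hf : ContDiff ℝ 2 f)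
    (Hess : EuclideanSpace ℝ (Fin n) → Matrix (Fin n) (Fin n) ℝ)
    (hHess : ∀ x, HasFDerivAt (gradient f) (Matrix.toEuclideanCLM (𝕜 := ℝ) (Hess x)) x)
    (μ L : ℝ) (hμ : 0 < μ) (hμL : μ ≤ L)
    (hbound : ∀ x ∈ X, (Hess x - μ • (1 : Matrix (Fin n) (Fin n) ℝ)).PosSemidef ∧
      (L • (1 : Matrix (Fin n) (Fin n) ℝ) - Hess x).PosSemidef)
    (xstar : EuclideanSpace ℝ (Fin n)) (hxstar : xstar ∈ X)
    (hminstar : ∀ y ∈ X, f xstar ≤ f y)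
    (huniq : ∀ z ∈ X, (∀ y ∈ X, f z ≤ f y) → z = xstar)
    (xk : EuclideanSpace ℝ (Fin n)) (hxk : xk ∈ X) (hkne : xk ≠ xstar)
    (Hk : Matrix (Fin n) (Fin n) ℝ) (hHk : Hk.PosDef)
    (ηk : ℝ) (hηk : ηk = max (lamMax (Hk⁻¹ * Hess xk)) (lamMax ((Hess xk)⁻¹ * Hk)))
    (fhat : EuclideanSpace ℝ (Fin n) → ℝ)
    (hfhat : ∀ x, fhat x =
      f xk + ⟪gradient f xk, x - xk⟫ + (1 / 2) * qForm Hk (x - xk))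
    (xt : EuclideanSpace ℝ (Fin n)) (hxtX : xt ∈ X)
    (hxtmin : ∀ w ∈ X, fhat xt ≤ fhat w)
    (lb : ℝ) (hlb0 : 0 ≤ lb) (hlb : lb ≤ f xk - f xstar)
    (xtil : EuclideanSpace ℝ (Fin n)) (hxtilX : xtil ∈ X)
    (hxtil : fhat xtil - fhat xt ≤ (lb / ‖gradient f xk‖) ^ 4) :
    ‖xtil - xt‖ ≤ Real.sqrt (2 * ηk / μ) * ‖xk - xstar‖ ^ 2 :=
  socgs_inexact_projection_accuracy_general X hconv f hf Hess hHess μ L hμ hbound xstar hxstar xk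
    hxk Hk hHk ηk hηk fhat hfhat xt hxtX hxtmin lb hlb0 hlb xtil hxtilX hxtil
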